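/- arXiv:1810.07506 — 3 statements merged into one kernel-verified Lean document; each statement's English description precedes it below -/
import Mathlib

section
/- Let G be a finite non-abelian d-group (d prime). Then G is minimal non-abelian (every proper subgroup is abelian) if and only if G can be generated by two elements and the commutator subgroup G' has order d. -/
open Subgroup

open Subgroup
open scoped commutatorElement

section AuxComm
variable {G : Type*} [Group G]

lemma conj_central {c : G} (hc : c ∈ Subgroup.center G) (x : G) :
    x * c * x⁻¹ = c := by
  rw [Subgroup.mem_center_iff] at hc
  rw [hc x, mul_inv_cancel_right]

lemma central_conj' {z : G} (hz : z ∈ Subgroup.center G) (q : G) :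
    z * q * z⁻¹ = q := by
  rw [Subgroup.mem_center_iff] at hz
  rw [← hz q, mul_inv_cancel_right]

lemma comm_mul_left {y z : G} (h : ⁅y, z⁆ ∈ Subgroup.center G) (x : G) :
    ⁅x * y, z⁆ = ⁅y, z⁆ * ⁅x, z⁆ := by
  have e : ⁅x * y, z⁆ = x * ⁅y, z⁆ * x⁻¹ * ⁅x, z⁆ := by group
  rw [e, conj_central h x]

lemma comm_mul_right {x z : G} (h : ⁅x, z⁆ ∈ Subgroup.center G) (y : G) :
    ⁅x, y * z⁆ = ⁅x, y⁆ * ⁅x, z⁆ := by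
  have e : ⁅x, y * z⁆ = ⁅x, y⁆ * (y * ⁅x, z⁆ * y⁻¹) := by group
  rw [e, conj_central h y]

lemma comm_inv_left {x z : G} (h : ⁅x, z⁆ ∈ Subgroup.center G) :
    ⁅x⁻¹, z⁆ = ⁅x, z⁆⁻¹ := by
  have e : ⁅x⁻¹, z⁆ = x⁻¹ * ⁅x, z⁆⁻¹ * (x⁻¹)⁻¹ := by group
  rw [e, conj_central (inv_mem h) x⁻¹]

lemma comm_inv_right {x z : G} (h : ⁅x, z⁆ ∈ Subgroup.center G) :
    ⁅x, z⁻¹⁆ = ⁅x, z⁆⁻¹ := by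
  have e : ⁅x, z⁻¹⁆ = z⁻¹ * ⁅x, z⁆⁻¹ * (z⁻¹)⁻¹ := by group
  rw [e, conj_central (inv_mem h) z⁻¹]

lemma comm_pow_left (hcen : ∀ u v : G, ⁅u, v⁆ ∈ Subgroup.center G) (x z : G) (k : ℕ) :
    ⁅x ^ k, z⁆ = ⁅x, z⁆ ^ k := by
  induction k with
  | zero => simp
  | succ k ih =>
    rw [pow_succ, comm_mul_left (hcen x z), ih, ← pow_succ']

lemma gen_commutator (hcen : ∀ u v : G, ⁅u, v⁆ ∈ Subgroup.center G)
    {a b : G} (hab : Subgroup.closure ({a, b} : Set G) = ⊤) :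
    commutator G = Subgroup.zpowers ⁅a, b⁆ := by
  apply le_antisymm
  · rw [_root_.commutator_def, Subgroup.commutator_le]
    intro x hx' y hy'
    clear hx' hy'
    have step1 : ∀ y : G, ⁅a, y⁆ ∈ zpowers ⁅a, b⁆ ∧ ⁅b, y⁆ ∈ zpowers ⁅a, b⁆ := by
      intro y
      have hy : y ∈ closure ({a, b} : Set G) := by rw [hab]; trivial
      induction hy using closure_induction with
      | mem u hu =>
        simp only [Set.mem_insert_iff, Set.mem_singleton_iff] at hu
        rcases hu with h | h
        · rw [h]; constructor
          · rw [commutatorElement_self]; exact one_mem _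
          · have e2 : ⁅b, a⁆ = ⁅a, b⁆⁻¹ := (commutatorElement_inv a b).symm
            rw [e2]; exact inv_mem (Subgroup.mem_zpowers _)
        · rw [h]; constructor
          · exact Subgroup.mem_zpowers ⁅a, b⁆
          · rw [commutatorElement_self]; exact one_mem _
      | one =>
        constructor <;> · rw [commutatorElement_one_right]; exact one_mem _
      | mul u v hu hv ihu ihv =>
        exact ⟨by rw [comm_mul_right (hcen _ _)]; exact mul_mem ihu.1 ihv.1,
          by rw [comm_mul_right (hcen _ _)]; exact mul_mem ihu.2 ihv.2⟩
      | inv u hu ihu =>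
        exact ⟨by rw [comm_inv_right (hcen _ _)]; exact inv_mem ihu.1,
          by rw [comm_inv_right (hcen _ _)]; exact inv_mem ihu.2⟩
    have hx : x ∈ closure ({a, b} : Set G) := by rw [hab]; trivial
    induction hx using closure_induction with
    | mem u hu =>
      simp only [Set.mem_insert_iff, Set.mem_singleton_iff] at hu
      rcases hu with h | h
      · rw [h]; exact (step1 y).1
      · rw [h]; exact (step1 y).2
    | one => rw [commutatorElement_one_left]; exact one_mem _
    | mul u v hu hv ihu ihv => rw [comm_mul_left (hcen _ _)]; exact mul_mem ihv ihu
    | inv u hu ihu => rw [comm_inv_left (hcen _ _)]; exact inv_mem ihu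
  · rw [Subgroup.zpowers_le]
    exact commutator_mem_commutator (Subgroup.mem_top a) (Subgroup.mem_top b)

end AuxComm


lemma centralizer_facts {G : Type*} [Group G] [Finite G] {d : ℕ} (hd : d.Prime)
    (hpG : IsPGroup d G)
    (hmin : ∀ H : Subgroup G, H < ⊤ → ∀ a ∈ H, ∀ b ∈ H, a * b = b * a)
    {u v : G} (huv : u * v ≠ v * u) :
    (∀ x : G, x ^ d ∈ Subgroup.centralizer {u}) ∧
      (∀ x y : G, ⁅x, y⁆ ∈ Subgroup.centralizer {u}) := by
  haveI : Fact d.Prime := ⟨hd⟩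
  set C := Subgroup.centralizer ({u} : Set G) with hC
  have hCne : C ≠ ⊤ := by
    intro htop
    apply huv
    have hv : v ∈ C := by rw [htop]; trivial
    exact Subgroup.mem_centralizer_iff.mp hv u (Set.mem_singleton u)
  have huC : u ∈ C :=
    Subgroup.mem_centralizer_iff.mpr fun h hh => by rw [Set.eq_of_mem_singleton hh]
  have hmaxC : ∀ M : Subgroup G, C < M → M = ⊤ := by
    intro M hM
    by_contra hMt
    have habel := hmin M (lt_top_iff_ne_top.mpr hMt)
    have hle : M ≤ C := by
      intro m hm
      apply Subgroup.mem_centralizer_iff.mpr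
      intro h hh
      rw [Set.eq_of_mem_singleton hh]
      exact habel u (hM.le huC) m hm
    exact hM.not_ge hle
  have hnil : Group.IsNilpotent G := hpG.isNilpotent
  have hCnormal : C.Normal := by
    rw [← Subgroup.normalizer_eq_top_iff]
    exact hmaxC _ (normalizerCondition_of_isNilpotent C (lt_top_iff_ne_top.mpr hCne))
  haveI := hCnormal
  set π := QuotientGroup.mk' C with hπ
  have hQsub : ∀ S : Subgroup (G ⧸ C), S = ⊥ ∨ S = ⊤ := by
    intro S
    have hle : C ≤ S.comap π := by
      intro g hg
      have h1 : π g = 1 := (QuotientGroup.eq_one_iff g).mpr hg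
      show π g ∈ S
      rw [h1]; exact S.one_mem
    have hSmap : S = (S.comap π).map π :=
      (Subgroup.map_comap_eq_self_of_surjective (QuotientGroup.mk'_surjective C) S).symm
    rcases hle.lt_or_eq with hlt | heq
    · right
      rw [hSmap, hmaxC _ hlt]
      exact Subgroup.map_top_of_surjective π (QuotientGroup.mk'_surjective C)
    · left
      rw [hSmap, ← heq]
      rw [eq_bot_iff]
      rintro y ⟨x, hx, rfl⟩
      rw [Subgroup.mem_bot]
      exact (QuotientGroup.eq_one_iff x).mpr hx
  obtain ⟨w, -, hw⟩ := SetLike.exists_of_lt (lt_top_iff_ne_top.mpr hCne : C < ⊤)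
  have hq : (π w : G ⧸ C) ≠ 1 :=
    fun h1 => hw ((QuotientGroup.eq_one_iff w).mp h1)
  obtain ⟨k, hk⟩ := (hpG.to_quotient C) (π w)
  obtain ⟨m, hmk, hord⟩ := (Nat.dvd_prime_pow hd).mp (orderOf_dvd_of_pow_eq_one hk)
  have hm0 : m ≠ 0 := by
    rintro rfl
    rw [pow_zero] at hord
    exact hq (orderOf_eq_one_iff.mp hord)
  set r := (π w) ^ d ^ (m - 1) with hr
  have hrd : r ^ d = 1 := by
    rw [hr, ← pow_mul, ← pow_succ, Nat.sub_add_cancel (Nat.one_le_iff_ne_zero.mpr hm0), ← hord]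
    exact pow_orderOf_eq_one _
  have hrne : r ≠ 1 := by
    intro h1
    have h2 : orderOf (π w) ∣ d ^ (m - 1) := orderOf_dvd_of_pow_eq_one h1
    rw [hord] at h2
    have := (Nat.pow_dvd_pow_iff_le_right hd.one_lt).mp h2
    omega
  have hrord : orderOf r = d := orderOf_eq_prime hrd hrne
  have hzr : Subgroup.zpowers r = ⊤ :=
    (hQsub _).resolve_left (by simpa [Subgroup.zpowers_eq_bot] using hrne)
  have hQcard : Nat.card (G ⧸ C) = d := by
    calc Nat.card (G ⧸ C) = Nat.card (⊤ : Subgroup (G ⧸ C)) := Subgroup.card_top.symm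
    _ = Nat.card (Subgroup.zpowers r) := by rw [hzr]
    _ = orderOf r := Nat.card_zpowers r
    _ = d := hrord
  constructor
  · intro x
    have h1 : π (x ^ d) = 1 := by
      rw [map_pow, ← hQcard]; exact pow_card_eq_one'
    exact (QuotientGroup.eq_one_iff _).mp h1
  · intro x y
    have hQc : ∀ s t : G ⧸ C, s * t = t * s := by
      intro s t
      have hs : s ∈ Subgroup.zpowers r := by rw [hzr]; trivial
      have ht : t ∈ Subgroup.zpowers r := by rw [hzr]; trivial
      obtain ⟨i, hi⟩ := Subgroup.mem_zpowers_iff.mp hs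
      obtain ⟨j, hj⟩ := Subgroup.mem_zpowers_iff.mp ht
      rw [← hi, ← hj, ← zpow_add, ← zpow_add, add_comm]
    have h1 : π ⁅x, y⁆ = 1 := by
      rw [map_commutatorElement, commutatorElement_eq_one_iff_mul_comm]
      exact hQc _ _
    exact (QuotientGroup.eq_one_iff _).mp h1


lemma forward_dir {G : Type*} [Group G] [Finite G] {d n : ℕ} (hd : d.Prime)
    (hcard : Nat.card G = d ^ n)
    (hmin : ∀ H : Subgroup G, H < ⊤ → ∀ a ∈ H, ∀ b ∈ H, a * b = b * a)
    {a b : G} (hab : a * b ≠ b * a) :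
    Subgroup.closure ({a, b} : Set G) = ⊤ ∧ Nat.card (commutator G) = d := by
  haveI : Fact d.Prime := ⟨hd⟩
  have hpG := IsPGroup.of_card hcard
  obtain ⟨hpowA, hcomA⟩ := centralizer_facts hd hpG hmin hab
  have hba : b * a ≠ a * b := fun h => hab h.symm
  obtain ⟨hpowB, hcomB⟩ := centralizer_facts hd hpG hmin hba
  have hgen : closure ({a, b} : Set G) = ⊤ := by
    by_contra hne
    have habel := hmin _ (lt_top_iff_ne_top.mpr hne)
    exact hab (habel a (subset_closure (by simp)) b (subset_closure (by simp)))
  -- A and B abelian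
  have hAne : Subgroup.centralizer ({a} : Set G) ≠ ⊤ := by
    intro htop
    apply hab
    have hb : b ∈ Subgroup.centralizer ({a} : Set G) := by rw [htop]; trivial
    exact Subgroup.mem_centralizer_iff.mp hb a (Set.mem_singleton a)
  have hBne : Subgroup.centralizer ({b} : Set G) ≠ ⊤ := by
    intro htop
    apply hba
    have ha : a ∈ Subgroup.centralizer ({b} : Set G) := by rw [htop]; trivial
    exact Subgroup.mem_centralizer_iff.mp ha b (Set.mem_singleton b)
  have hAab := hmin _ (lt_top_iff_ne_top.mpr hAne)
  have hBab := hmin _ (lt_top_iff_ne_top.mpr hBne)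
  have haA : a ∈ Subgroup.centralizer ({a} : Set G) :=
    Subgroup.mem_centralizer_iff.mpr fun h hh => by rw [Set.eq_of_mem_singleton hh]
  have hbB : b ∈ Subgroup.centralizer ({b} : Set G) :=
    Subgroup.mem_centralizer_iff.mpr fun h hh => by rw [Set.eq_of_mem_singleton hh]
  have hABZ : ∀ g : G, g ∈ Subgroup.centralizer ({a} : Set G) →
      g ∈ Subgroup.centralizer ({b} : Set G) → g ∈ Subgroup.center G := by
    intro g hga hgb
    rw [Subgroup.mem_center_iff]
    intro x
    have hx : x ∈ closure ({a, b} : Set G) := by rw [hgen]; trivial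
    have hsub : closure ({a, b} : Set G) ≤ Subgroup.centralizer ({g} : Set G) := by
      rw [Subgroup.closure_le]
      rintro y hy
      simp only [Set.mem_insert_iff, Set.mem_singleton_iff] at hy
      rcases hy with h | h
      · rw [h]
        exact Subgroup.mem_centralizer_iff.mpr fun h' hh' => by
          rw [Set.eq_of_mem_singleton hh']
          exact (hAab a haA g hga).symm
      · rw [h]
        exact Subgroup.mem_centralizer_iff.mpr fun h' hh' => by
          rw [Set.eq_of_mem_singleton hh']
          exact (hBab b hbB g hgb).symm
    exact (Subgroup.mem_centralizer_iff.mp (hsub hx) g (Set.mem_singleton g)).symm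
  have hcen : ∀ u v : G, ⁅u, v⁆ ∈ Subgroup.center G := fun u v =>
    hABZ _ (hcomA u v) (hcomB u v)
  have hadA : a ^ d ∈ Subgroup.centralizer ({a} : Set G) :=
    Subgroup.mem_centralizer_iff.mpr fun h hh => by
      rw [Set.eq_of_mem_singleton hh]
      exact (Commute.refl a).pow_right d
  have hadZ : a ^ d ∈ Subgroup.center G := hABZ _ hadA (hpowB a)
  have hcd : ⁅a, b⁆ ^ d = 1 := by
    rw [← comm_pow_left hcen, commutatorElement_eq_one_iff_mul_comm]
    exact (Subgroup.mem_center_iff.mp hadZ b).symm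
  have hcne : ⁅a, b⁆ ≠ 1 := by
    rw [Ne, commutatorElement_eq_one_iff_mul_comm]; exact hab
  refine ⟨hgen, ?_⟩
  rw [gen_commutator hcen hgen, Nat.card_zpowers, orderOf_eq_prime hcd hcne]


lemma center_of_card_prime {G : Type*} [Group G] [Finite G] {d : ℕ} (hd : d.Prime)
    (hpG : IsPGroup d G) (N : Subgroup G) [hNn : N.Normal] (hN : Nat.card N = d) :
    N ≤ Subgroup.center G := by
  haveI : Fact d.Prime := ⟨hd⟩
  letI : MulAction G N :=
    { smul := fun g n => ⟨g * n * g⁻¹, hNn.conj_mem n.1 n.2 g⟩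
      one_smul := fun n => by
        apply Subtype.ext
        show (1 : G) * n * (1 : G)⁻¹ = n
        simp
      mul_smul := fun g h n => by
        apply Subtype.ext
        show (g * h) * n * (g * h)⁻¹ = g * (h * n * h⁻¹) * g⁻¹
        group }
  have hsmul : ∀ (g : G) (n : N), ((g • n : N) : G) = g * n * g⁻¹ := fun g n => rfl
  have key := hpG.card_modEq_card_fixedPoints (α := N)
  rw [hN] at key
  have h1 : (1 : N) ∈ MulAction.fixedPoints G N := by
    intro g
    apply Subtype.ext
    rw [hsmul]
    simp
  have hdvd : d ∣ Nat.card (MulAction.fixedPoints G N) :=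
    Nat.modEq_zero_iff_dvd.mp (key.symm.trans (Nat.modEq_zero_iff_dvd.mpr dvd_rfl))
  haveI : Nonempty (MulAction.fixedPoints G N) := ⟨⟨1, h1⟩⟩
  have hpos : 0 < Nat.card (MulAction.fixedPoints G N) := Nat.card_pos
  have hge : d ≤ Nat.card (MulAction.fixedPoints G N) := Nat.le_of_dvd hpos hdvd
  have huniv : MulAction.fixedPoints G N = Set.univ := by
    exact Set.eq_of_subset_of_ncard_le (Set.subset_univ _) (by rw [Set.ncard_univ, ← Nat.card_coe_set_eq, hN]; exact hge) (Set.finite_univ (α := ↥N))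
  intro x hx
  rw [Subgroup.mem_center_iff]
  intro g
  have hfix : (⟨x, hx⟩ : N) ∈ MulAction.fixedPoints G N := by rw [huniv]; trivial
  have h2 : g * x * g⁻¹ = x := by
    have := hfix g
    exact congrArg Subtype.val this
  calc g * x = (g * x * g⁻¹) * g := by group
  _ = x * g := by rw [h2]


lemma zpow_val_eq {Q : Type*} [Group Q] {d : ℕ} [NeZero d] {g : Q} (hgd : g ^ d = 1) (i : ℤ) :
    g ^ (((i : ZMod d)).val) = g ^ i := by
  have h1 : g ^ ((((i : ZMod d)).val : ℤ)) = g ^ i := by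
    rw [ZMod.val_intCast]
    conv_rhs => rw [← Int.emod_add_mul_ediv i d]
    rw [zpow_add, zpow_mul]
    have : g ^ ((d : ℤ)) = 1 := by rw [zpow_natCast, hgd]
    rw [this, one_zpow, mul_one]
  rw [← h1, zpow_natCast]

lemma backward_dir {G : Type*} [Group G] [Finite G] {d n : ℕ} (hd : d.Prime)
    (hcard : Nat.card G = d ^ n)
    (hnab : ¬ ∀ a b : G, a * b = b * a)
    {a b : G} (hgen : Subgroup.closure ({a, b} : Set G) = ⊤)
    (hNcard : Nat.card (commutator G) = d) :
    ∀ H : Subgroup G, H < ⊤ → ∀ x ∈ H, ∀ y ∈ H, x * y = y * x := by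
  haveI : Fact d.Prime := ⟨hd⟩
  haveI : NeZero d := ⟨hd.pos.ne'⟩
  have hpG := IsPGroup.of_card hcard
  have hNle : commutator G ≤ Subgroup.center G := center_of_card_prime hd hpG _ hNcard
  have hcen : ∀ u v : G, ⁅u, v⁆ ∈ Subgroup.center G := fun u v =>
    hNle (commutator_mem_commutator (mem_top u) (mem_top v))
  have hdpow : ∀ u v : G, ⁅u, v⁆ ^ d = 1 := by
    intro u v
    have hmem : ⁅u, v⁆ ∈ commutator G := commutator_mem_commutator (mem_top u) (mem_top v)
    have h1 : (⟨⁅u, v⁆, hmem⟩ : commutator G) ^ d = 1 := by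
      rw [← hNcard]; exact pow_card_eq_one'
    have := congrArg (Subtype.val) h1
    simpa using this
  have hpowZ : ∀ x : G, x ^ d ∈ Subgroup.center G := by
    intro x
    rw [Subgroup.mem_center_iff]
    intro g
    have h1 : ⁅x ^ d, g⁆ = 1 := by rw [comm_pow_left hcen]; exact hdpow x g
    exact (commutatorElement_eq_one_iff_mul_comm.mp h1).symm
  -- the subgroup W
  set W := Subgroup.closure (Set.range fun x : G => x ^ d) ⊔ commutator G with hW
  have hWle : W ≤ Subgroup.center G := by
    apply sup_le _ hNle
    rw [Subgroup.closure_le]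
    rintro _ ⟨x, rfl⟩
    exact hpowZ x
  haveI hWnormal : W.Normal := by
    constructor
    intro w hw g
    have h2 : g * w * g⁻¹ = w := by
      have hcw := Subgroup.mem_center_iff.mp (hWle hw)
      rw [hcw g, mul_inv_cancel_right]
    rw [h2]; exact hw
  set π := QuotientGroup.mk' W with hπ
  have hπsurj := QuotientGroup.mk'_surjective W
  have hQ2comm : ∀ s t : G ⧸ W, s * t = t * s := by
    intro s t
    obtain ⟨x, rfl⟩ := hπsurj s
    obtain ⟨y, rfl⟩ := hπsurj t
    rw [← commutatorElement_eq_one_iff_mul_comm, ← map_commutatorElement]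
    exact (QuotientGroup.eq_one_iff _).mpr
      (Subgroup.mem_sup_right (commutator_mem_commutator (mem_top x) (mem_top y)))
  have hQ2pow : ∀ s : G ⧸ W, s ^ d = 1 := by
    intro s
    obtain ⟨x, rfl⟩ := hπsurj s
    rw [← map_pow]
    exact (QuotientGroup.eq_one_iff _).mpr
      (Subgroup.mem_sup_left (subset_closure ⟨x, rfl⟩))
  have hWindex : W.index ≤ d * d := by
    have hsurj2 : Function.Surjective
        (fun p : ZMod d × ZMod d => (π a) ^ (p.1.val) * (π b) ^ (p.2.val)) := by
      intro s
      have hgen2 : ∃ i j : ℤ, s = (π a) ^ i * (π b) ^ j := by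
        obtain ⟨x, rfl⟩ := hπsurj s
        have hx : x ∈ closure ({a, b} : Set G) := by rw [hgen]; trivial
        induction hx using closure_induction with
        | mem u hu =>
          simp only [Set.mem_insert_iff, Set.mem_singleton_iff] at hu
          rcases hu with h | h
          · refine ⟨1, 0, ?_⟩
            rw [h, zpow_one, zpow_zero, mul_one]
          · refine ⟨0, 1, ?_⟩
            rw [h, zpow_zero, zpow_one, one_mul]
        | one =>
          refine ⟨0, 0, ?_⟩
          rw [zpow_zero, zpow_zero, mul_one]
          exact (map_one π).symm
        | mul u v hu hv ihu ihv =>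
          obtain ⟨i, j, hij⟩ := ihu
          obtain ⟨k, l, hkl⟩ := ihv
          refine ⟨i + k, j + l, ?_⟩
          have hc0 : Commute (π b) (π a) := hQ2comm _ _
          have hc : Commute ((π b) ^ j) ((π a) ^ k) := hc0.zpow_zpow j k
          rw [map_mul, hij, hkl, zpow_add, zpow_add]
          exact hc.mul_mul_mul_comm _ _
        | inv u hu ihu =>
          obtain ⟨i, j, hij⟩ := ihu
          refine ⟨-i, -j, ?_⟩
          rw [map_inv, hij, mul_inv_rev, zpow_neg, zpow_neg]
          exact hQ2comm _ _
      obtain ⟨i, j, hij⟩ := hgen2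
      refine ⟨((i : ZMod d), (j : ZMod d)), ?_⟩
      show (π a) ^ (((i : ZMod d)).val) * (π b) ^ (((j : ZMod d)).val) = s
      rw [zpow_val_eq (hQ2pow (π a)) i, zpow_val_eq (hQ2pow (π b)) j, hij]
    have h3 : Nat.card (G ⧸ W) ≤ Nat.card (ZMod d × ZMod d) :=
      Nat.card_le_card_of_surjective _ hsurj2
    rw [Nat.card_prod, Nat.card_zmod] at h3
    rw [Subgroup.index_eq_card]
    exact h3
  -- center index
  set Z := Subgroup.center G with hZ
  have hZdvd : Z.index ∣ d ^ n := by
    rw [← hcard]; exact Subgroup.index_dvd_card Z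
  obtain ⟨k, hkn, hZidx⟩ := (Nat.dvd_prime_pow hd).mp hZdvd
  have hk2 : 2 ≤ k := by
    by_contra hlt
    push_neg at hlt
    interval_cases k
    · rw [pow_zero] at hZidx
      have hZtop : Z = ⊤ := Subgroup.index_eq_one.mp hZidx
      apply hnab
      intro x y
      have hx : x ∈ Z := by rw [hZtop]; trivial
      exact (Subgroup.mem_center_iff.mp hx y).symm
    · rw [pow_one] at hZidx
      have hQZcard : Nat.card (G ⧸ Z) = d := by rw [← Subgroup.index_eq_card, hZidx]
      haveI : IsCyclic (G ⧸ Z) := isCyclic_of_prime_card hQZcard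
      apply hnab
      intro x y
      exact commutative_of_cyclic_center_quotient (QuotientGroup.mk' Z)
        (by rw [QuotientGroup.ker_mk']) x y
  have hZWdvd : Z.index ∣ W.index := Subgroup.index_dvd_of_le hWle
  have hWpos : 0 < W.index := Nat.pos_of_ne_zero Subgroup.index_ne_zero_of_finite
  have hle1 : Z.index ≤ W.index := Nat.le_of_dvd hWpos hZWdvd
  have hd2 : d * d ≤ Z.index := by
    rw [hZidx, ← sq]
    exact Nat.pow_le_pow_right hd.pos hk2
  have hZeq : Z.index = W.index := le_antisymm hle1 (hWindex.trans hd2)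
  have hZleW : Z ≤ W := by
    have h4 := Subgroup.relIndex_mul_index hWle
    rw [hZeq] at h4
    have h5 : W.relIndex Z = 1 := by
      have h6 : W.relIndex Z * W.index = 1 * W.index := by rw [one_mul]; exact h4
      exact Nat.eq_of_mul_eq_mul_right hWpos h6
    exact Subgroup.relIndex_eq_one.mp h5
  have hZW' : Z = W := le_antisymm hZleW hWle
  have hZidx2 : Z.index = d * d := le_antisymm (hZeq ▸ hWindex) hd2
  -- main argument
  intro H hH x hx y hy
  by_cases hK : H ⊔ Z = ⊤
  · exfalso
    have hmemK : ∀ g : G, ∃ h ∈ H, ∃ z ∈ Z, h * z = g := by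
      intro g
      have hg : g ∈ H ⊔ Z := by rw [hK]; trivial
      rw [← SetLike.mem_coe, Subgroup.mul_normal] at hg
      exact hg
    have hcomH : ∀ u v : G, ⁅u, v⁆ ∈ H := by
      intro u v
      obtain ⟨h1, hh1, z1, hz1, rfl⟩ := hmemK u
      obtain ⟨h2, hh2, z2, hz2, rfl⟩ := hmemK v
      have e2 : ∀ p q z : G, z ∈ Z → ⁅p * z, q⁆ = ⁅p, q⁆ := by
        intro p q z hz
        have h' : ⁅p * z, q⁆ = p * (z * q * z⁻¹) * p⁻¹ * q⁻¹ := by group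
        rw [h', central_conj' hz q, ← commutatorElement_def]
      have e3 : ∀ p q z : G, z ∈ Z → ⁅p, q * z⁆ = ⁅p, q⁆ := by
        intro p q z hz
        have h' : ⁅p, q * z⁆ = p * q * (z * p⁻¹ * z⁻¹) * q⁻¹ := by group
        rw [h', central_conj' hz p⁻¹, ← commutatorElement_def]
      rw [e2 _ _ _ hz1, e3 _ _ _ hz2, commutatorElement_def]
      exact mul_mem (mul_mem (mul_mem hh1 hh2) (inv_mem hh1)) (inv_mem hh2)
    have hNH : _root_.commutator G ≤ H := by
      rw [_root_.commutator_def, Subgroup.commutator_le]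
      intro p _ q _
      exact hcomH p q
    haveI hHn : H.Normal := by
      constructor
      intro m hm g
      have e : g * m * g⁻¹ = ⁅g, m⁆ * m := by group
      rw [e]
      exact mul_mem (hcomH g m) hm
    set ρ := QuotientGroup.mk' H with hρ
    have hρs := QuotientGroup.mk'_surjective H
    have hQcomm : ∀ s t : G ⧸ H, s * t = t * s := by
      intro s t
      obtain ⟨x0, rfl⟩ := hρs s
      obtain ⟨y0, rfl⟩ := hρs t
      rw [← commutatorElement_eq_one_iff_mul_comm, ← map_commutatorElement]
      exact (QuotientGroup.eq_one_iff _).mpr (hcomH x0 y0)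
    have hpowQ : ∀ s : G ⧸ H, ∃ t, t ^ d = s := by
      set T : Subgroup (G ⧸ H) :=
        { carrier := {s | ∃ t, t ^ d = s}
          one_mem' := ⟨1, one_pow d⟩
          mul_mem' := by
            rintro s1 s2 ⟨t1, rfl⟩ ⟨t2, rfl⟩
            have hct : Commute t1 t2 := hQcomm t1 t2
            exact ⟨t1 * t2, hct.mul_pow d⟩
          inv_mem' := by
            rintro s ⟨t, rfl⟩
            exact ⟨t⁻¹, inv_pow t d⟩ } with hT
      intro s
      obtain ⟨x0, rfl⟩ := hρs s
      show ρ x0 ∈ T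
      have hx0 : x0 ∈ H ⊔ Z := by rw [hK]; trivial
      rw [← SetLike.mem_coe, Subgroup.mul_normal] at hx0
      obtain ⟨h, hh, z, hz, rfl⟩ := hx0
      rw [map_mul]
      have hρh : ρ h = 1 := (QuotientGroup.eq_one_iff h).mpr hh
      rw [hρh, one_mul]
      rw [hZW'] at hz
      have hmem2 : ρ z ∈ W.map ρ := Subgroup.mem_map_of_mem ρ hz
      have hmap : W.map ρ ≤ T := by
        rw [hW, Subgroup.map_sup]
        apply sup_le
        · rw [MonoidHom.map_closure, Subgroup.closure_le]
          rintro _ ⟨_, ⟨x1, rfl⟩, rfl⟩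
          exact ⟨ρ x1, (map_pow ρ x1 d).symm⟩
        · intro w hw
          obtain ⟨w0, hw0, rfl⟩ := hw
          have h6 : ρ w0 = 1 := (QuotientGroup.eq_one_iff w0).mpr (hNH hw0)
          rw [h6]
          exact T.one_mem
      exact hmap hmem2
    have hinj : Function.Injective (fun s : G ⧸ H => s ^ d) :=
      Finite.injective_iff_surjective.mpr (fun s => hpowQ s)
    have hHidx : d ∣ Nat.card (G ⧸ H) := by
      have h1 : Nat.card (G ⧸ H) ∣ d ^ n := by
        rw [← hcard, ← Subgroup.index_eq_card]
        exact Subgroup.index_dvd_card H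
      obtain ⟨k2, hk2n, hk2⟩ := (Nat.dvd_prime_pow hd).mp h1
      have hk0 : k2 ≠ 0 := by
        rintro rfl
        rw [pow_zero] at hk2
        have h7 : H.index = 1 := by rw [Subgroup.index_eq_card, hk2]
        exact hH.ne (Subgroup.index_eq_one.mp h7)
      rw [hk2]
      exact dvd_pow_self d hk0
    obtain ⟨q, hq⟩ := exists_prime_orderOf_dvd_card' (G := G ⧸ H) d hHidx
    have hq1 : q ^ d = 1 := by rw [← hq]; exact pow_orderOf_eq_one q
    have hq2 : q = 1 := hinj (by simpa using hq1)
    rw [hq2, orderOf_one] at hq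
    exact hd.one_lt.ne' hq.symm
  · -- K < ⊤
    set K := H ⊔ Z with hKdef
    set πZ := QuotientGroup.mk' Z with hπZ
    set K' := K.map πZ with hK'
    have hK'ne : K' ≠ ⊤ := by
      intro htop
      have h8 : Subgroup.comap πZ K' = ⊤ := by rw [htop]; exact Subgroup.comap_top _
      rw [hK', Subgroup.comap_map_eq, QuotientGroup.ker_mk'] at h8
      apply hK
      calc H ⊔ Z = (H ⊔ Z) ⊔ Z := by rw [sup_assoc, sup_idem]
      _ = ⊤ := h8
    have hcardQZ : Nat.card (G ⧸ Z) = d * d := by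
      rw [← Subgroup.index_eq_card, hZidx2]
    have hK'dvd : Nat.card K' ∣ d * d := by
      have h9 := Subgroup.card_subgroup_dvd_card K'
      rwa [hcardQZ] at h9
    have hK'lt : Nat.card K' ≠ d * d := by
      intro he
      exact hK'ne (Subgroup.eq_top_of_card_eq K' (by rw [he, hcardQZ]))
    have hcyc : IsCyclic K' := by
      have h10 : Nat.card K' ∣ d ^ 2 := by rwa [sq]
      obtain ⟨k3, hk3, hkc⟩ := (Nat.dvd_prime_pow hd).mp h10
      interval_cases k3
      · rw [pow_zero] at hkc
        haveI := (Nat.card_eq_one_iff_unique.mp hkc).1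
        infer_instance
      · rw [pow_one] at hkc
        exact isCyclic_of_prime_card hkc
      · exact absurd (by rwa [sq] at hkc) hK'lt
    obtain ⟨g, hg⟩ := IsCyclic.exists_generator (α := K')
    obtain ⟨t, htK, htg⟩ := Subgroup.mem_map.mp g.2
    have hdecomp : ∀ w : G, w ∈ H → ∃ i : ℤ, ∃ z ∈ Z, w = t ^ i * z := by
      intro w hw
      have hwK : w ∈ K := Subgroup.mem_sup_left hw
      have h11 : (⟨πZ w, Subgroup.mem_map_of_mem πZ hwK⟩ : K') ∈ Subgroup.zpowers g := hg _
      obtain ⟨i, hi⟩ := Subgroup.mem_zpowers_iff.mp h11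
      have hi' : πZ (t ^ i) = πZ w := by
        have h12 := congrArg (Subtype.val) hi
        rw [map_zpow, htg]
        calc (g : G ⧸ Z) ^ i = ((g ^ i : K') : G ⧸ Z) := by rw [SubgroupClass.coe_zpow]
        _ = πZ w := h12
      have hz : (t ^ i)⁻¹ * w ∈ Z := by
        have h13 : πZ ((t ^ i)⁻¹ * w) = 1 := by
          rw [map_mul, map_inv, hi', inv_mul_cancel]
        exact (QuotientGroup.eq_one_iff _).mp h13
      exact ⟨i, (t ^ i)⁻¹ * w, hz, by group⟩
    obtain ⟨i, z1, hz1, rfl⟩ := hdecomp x hx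
    obtain ⟨j, z2, hz2, rfl⟩ := hdecomp y hy
    have c1 := Subgroup.mem_center_iff.mp hz1
    have c2 := Subgroup.mem_center_iff.mp hz2
    have hco1 : Commute z1 (t ^ j) := (c1 (t ^ j)).symm
    have hco2 : Commute z2 (t ^ i) := (c2 (t ^ i)).symm
    calc (t ^ i * z1) * (t ^ j * z2) = (t ^ i * t ^ j) * (z1 * z2) :=
          hco1.mul_mul_mul_comm _ _
    _ = (t ^ j * t ^ i) * (z2 * z1) := by
          rw [← zpow_add, add_comm, zpow_add, c2 z1]
    _ = (t ^ j * z2) * (t ^ i * z1) := (hco2.mul_mul_mul_comm _ _).symm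


/-- Let `G` be a finite non-abelian `d`-group (`d` prime). Then `G` is
minimal non-abelian (every proper subgroup is abelian) if and only if `G` can be
generated by two elements and the commutator subgroup `G'` has order `d`. -/
theorem stmt1 {G : Type*} [Group G] [Finite G] (d : ℕ) (hd : d.Prime)
    (n : ℕ) (hcard : Nat.card G = d ^ n)
    (hnab : ¬ ∀ a b : G, a * b = b * a) :
    (∀ H : Subgroup G, H < ⊤ → ∀ a ∈ H, ∀ b ∈ H, a * b = b * a) ↔
      ((∃ a b : G, Subgroup.closure ({a, b} : Set G) = ⊤) ∧
        Nat.card (commutator G) = d) := by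
  constructor
  · intro hmin
    have hnab' := hnab
    push_neg at hnab'
    obtain ⟨a, b, hab⟩ := hnab'
    obtain ⟨hgen, hcardN⟩ := forward_dir hd hcard hmin hab
    exact ⟨⟨a, b, hgen⟩, hcardN⟩
  · rintro ⟨⟨a, b, hgen⟩, hcardN⟩
    exact backward_dir hd hcard hnab hgen hcardN
end

section
/- Let G be a group with elements α, β, s_1, s_2 such that [α,β] = s_1, [s_1,β] = s_2, [s_2,β] = s_2^{-3}s_1^{-3}, [s_1,α] = [s_1,s_2] = [s_2,α] = 1, and β^3 = 1. Then (αβ)^3 = s_2 s_1^3 α^3. -/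
/-!
Since `β³ = 1`, `(αβ)³ = α · α^(β²) · α^β`, where `x^β = β⁻¹ x β`. The commutator relations
say `α^β = α s₁` and `s₁^β = s₁ s₂`, so `α^(β²) = α s₁ s₁ s₂`, and the product
`α · α s₁² s₂ · α s₁` collapses to `s₂ s₁³ α³` because `α, s₁, s₂` commute.
-/

section

variable {G : Type*} [Group G]

theorem inv_mul_mul_eq_mul_of_inv_mul_inv_mul_mul_eq {a b c : G}
    (h : a⁻¹ * b⁻¹ * a * b = c) : b⁻¹ * a * b = a * c := by
  rw [← h]; group

theorem commute_of_inv_mul_inv_mul_mul_eq_one {a b : G} (h : a⁻¹ * b⁻¹ * a * b = 1) :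
    Commute a b := by
  have := inv_mul_mul_eq_mul_of_inv_mul_inv_mul_mul_eq h
  rw [mul_one, mul_assoc, inv_mul_eq_iff_eq_mul] at this
  exact this

theorem mul_pow_three_eq_of_pow_three_eq_one {a b : G} (hb : b ^ 3 = 1) :
    (a * b) ^ 3 = a * (b⁻¹ * (b⁻¹ * a * b) * b) * (b⁻¹ * a * b) := by
  have hb' : b⁻¹ * b⁻¹ = b := by
    rw [← mul_inv_rev, inv_eq_iff_mul_eq_one, ← hb, pow_three, mul_assoc]
  calc (a * b) ^ 3 = a * ((b⁻¹ * b⁻¹) * a * b) * a * b := by rw [hb', pow_three]; group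
    _ = _ := by group

theorem inv_mul_mul_mul_distrib (b x y : G) : b⁻¹ * (x * y) * b = (b⁻¹ * x * b) * (b⁻¹ * y * b) := by
  group

end

theorem stmt6_general {G : Type*} [Group G] (α β s₁ s₂ : G)
    (hαβ : α⁻¹ * β⁻¹ * α * β = s₁)
    (h1β : s₁⁻¹ * β⁻¹ * s₁ * β = s₂)
    (h1α : s₁⁻¹ * α⁻¹ * s₁ * α = 1)
    (h12 : s₁⁻¹ * s₂⁻¹ * s₁ * s₂ = 1)
    (h2α : s₂⁻¹ * α⁻¹ * s₂ * α = 1)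
    (hβ : β ^ 3 = 1) :
    (α * β) ^ 3 = s₂ * s₁ ^ 3 * α ^ 3 := by
  have hα : β⁻¹ * α * β = α * s₁ := inv_mul_mul_eq_mul_of_inv_mul_inv_mul_mul_eq hαβ
  have hs₁ : β⁻¹ * s₁ * β = s₁ * s₂ := inv_mul_mul_eq_mul_of_inv_mul_inv_mul_mul_eq h1β
  have c1 := commute_of_inv_mul_inv_mul_mul_eq_one h1α
  have c2 := commute_of_inv_mul_inv_mul_mul_eq_one h12
  have c3 := commute_of_inv_mul_inv_mul_mul_eq_one h2α
  rw [mul_pow_three_eq_of_pow_three_eq_one hβ, hα, inv_mul_mul_mul_distrib, hα, hs₁]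
  simp only [pow_succ, pow_zero, one_mul, mul_assoc, c1.eq, c2.eq,
    c1.left_comm, c2.left_comm, c3.left_comm]

/-- In any group `G`, if `[α, β] = s₁`, `[s₁, β] = s₂`,
`[s₂, β] = s₂⁻³ s₁⁻³`, `α, s₁, s₂` pairwise commute and `β³ = 1`
(where `[a, b] = a⁻¹ b⁻¹ a b`), then `(αβ)³ = s₂ s₁³ α³`. -/
theorem stmt6 {G : Type*} [Group G] (α β s₁ s₂ : G)
    (hαβ : α⁻¹ * β⁻¹ * α * β = s₁)
    (h1β : s₁⁻¹ * β⁻¹ * s₁ * β = s₂)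
    (h2β : s₂⁻¹ * β⁻¹ * s₂ * β = s₂ ^ (-3 : ℤ) * s₁ ^ (-3 : ℤ))
    (h1α : s₁⁻¹ * α⁻¹ * s₁ * α = 1)
    (h12 : s₁⁻¹ * s₂⁻¹ * s₁ * s₂ = 1)
    (h2α : s₂⁻¹ * α⁻¹ * s₂ * α = 1)
    (hβ : β ^ 3 = 1) :
    (α * β) ^ 3 = s₂ * s₁ ^ 3 * α ^ 3 :=
  stmt6_general α β s₁ s₂ hαβ h1β h1α h12 h2α hβ
end

section
/- In the function field F = K(x, y) with y^9 + x^6 + x^3 = 0 over an algebraically closed field K of characteristic p ≠ 3, the element t = (x^9 - 3x^3 - 1)/(x^3(x^3+1)) satisfies t = x^3 + x^3/y^9 + y^9/x^6. Moreover, if γ is an automorphism of an overfield L ⊇ F fixing t, and γ(x^3) = θ ∈ L satisfies (θ^3 - 3θ - 1)(x^6 + x^3) = (θ^2 + θ)(x^9 - 3x^3 - 1), then θ = x^3, or θ = -(x^3+1)/x^3, or θ = -1/(x^3+1). -/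
/-!
With `ξ = x³`, the curve equation reads `y⁹ = -ξ(ξ + 1)`, which turns `x³ + x³/y⁹ + y⁹/x⁶` into
`ξ - 1/(ξ + 1) - (ξ + 1)/ξ = (ξ³ - 3ξ - 1)/(ξ(ξ + 1))`. The equation for `θ` says that `θ` and `ξ`
have the same image under the degree-three map `ξ ↦ (ξ³ - 3ξ - 1)/(ξ² + ξ)`, and the cross-multiplied
difference factors as `(θ - ξ)(θξ + ξ + 1)(θξ + θ + 1)`; its three roots are the orbit of `ξ`
under the order-three Möbius transformation `ξ ↦ -(ξ + 1)/ξ`.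
-/

theorem Transcendental.ne_algebraMap {R A : Type*} [CommRing R] [Nontrivial R] [Ring A]
    [Algebra R A] {a : A} (ha : Transcendental R a) (c : R) : a ≠ algebraMap R A c :=
  fun h ↦ ha (h ▸ isAlgebraic_algebraMap c)

section Field

variable {F : Type*} [Field F]

theorem div_eq_add_div_add_div_of_add_sq_add_eq_zero {ξ η : F} (hξ : ξ ≠ 0) (hξ1 : ξ + 1 ≠ 0)
    (h : η + ξ ^ 2 + ξ = 0) :
    (ξ ^ 3 - 3 * ξ - 1) / (ξ * (ξ + 1)) = ξ + ξ / η + η / ξ ^ 2 := by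
  rw [show η = -(ξ * (ξ + 1)) by linear_combination h]
  field_simp
  ring

theorem cubic_cross_sub_eq_mul_mul {R : Type*} [CommRing R] (θ ξ : R) :
    (θ ^ 3 - 3 * θ - 1) * (ξ ^ 2 + ξ) - (θ ^ 2 + θ) * (ξ ^ 3 - 3 * ξ - 1) =
      (θ - ξ) * (θ * ξ + ξ + 1) * (θ * ξ + θ + 1) := by
  ring

theorem eq_or_eq_or_eq_of_cubic_cross_eq {θ ξ : F} (hξ : ξ ≠ 0) (hξ1 : ξ + 1 ≠ 0)
    (h : (θ ^ 3 - 3 * θ - 1) * (ξ ^ 2 + ξ) = (θ ^ 2 + θ) * (ξ ^ 3 - 3 * ξ - 1)) :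
    θ = ξ ∨ θ = -(ξ + 1) / ξ ∨ θ = -1 / (ξ + 1) := by
  have hprod : (θ - ξ) * (θ * ξ + ξ + 1) * (θ * ξ + θ + 1) = 0 := by
    rw [← cubic_cross_sub_eq_mul_mul, h, sub_self]
  rcases mul_eq_zero.1 hprod with h' | h'
  · rcases mul_eq_zero.1 h' with h' | h'
    · exact .inl (sub_eq_zero.1 h')
    · exact .inr (.inl (by rw [eq_div_iff hξ]; linear_combination h'))
  · exact .inr (.inr (by rw [eq_div_iff hξ1]; linear_combination h'))

end Field

theorem stmt17_general {K : Type u} [Field K]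
    {F : Type v} [Field F] [Algebra K F]
    (x y : F) (hrel : y ^ 9 + x ^ 6 + x ^ 3 = 0)
    (hx : Transcendental K x) :
    (x ^ 9 - 3 * x ^ 3 - 1) / (x ^ 3 * (x ^ 3 + 1)) =
        x ^ 3 + x ^ 3 / y ^ 9 + y ^ 9 / x ^ 6 ∧
    ∀ (L : Type w) [Field L] [Algebra F L] (γ : L ≃+* L),
      γ (algebraMap F L ((x ^ 9 - 3 * x ^ 3 - 1) / (x ^ 3 * (x ^ 3 + 1)))) =
        algebraMap F L ((x ^ 9 - 3 * x ^ 3 - 1) / (x ^ 3 * (x ^ 3 + 1))) →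
      ∀ θ : L, θ = γ (algebraMap F L (x ^ 3)) →
        (θ ^ 3 - 3 * θ - 1) *
            (algebraMap F L x ^ 6 + algebraMap F L x ^ 3) =
          (θ ^ 2 + θ) *
            (algebraMap F L x ^ 9 - 3 * algebraMap F L x ^ 3 - 1) →
        θ = algebraMap F L (x ^ 3) ∨
          θ = -(algebraMap F L (x ^ 3) + 1) / algebraMap F L (x ^ 3) ∨
          θ = -1 / (algebraMap F L (x ^ 3) + 1) := by
  have hξ : x ^ 3 ≠ 0 := by simpa using (hx.pow three_pos).ne_algebraMap 0
  have hξ1 : x ^ 3 + 1 ≠ 0 := by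
    simpa [add_eq_zero_iff_eq_neg] using (hx.pow three_pos).ne_algebraMap (-1)
  refine ⟨?_, fun L _ _ γ _ θ _ heq ↦ ?_⟩
  · rw [show x ^ 9 = (x ^ 3) ^ 3 by ring, show x ^ 6 = (x ^ 3) ^ 2 by ring]
    exact div_eq_add_div_add_div_of_add_sq_add_eq_zero hξ hξ1 (by linear_combination hrel)
  · refine eq_or_eq_or_eq_of_cubic_cross_eq ((map_ne_zero _).2 hξ)
      (by simpa using (map_ne_zero (algebraMap F L)).2 hξ1) ?_
    rw [map_pow]
    linear_combination heq

/-- In the function field `F = K(x, y)` of the curve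
`y⁹ + x⁶ + x³ = 0` over an algebraically closed field `K` of characteristic `≠ 3`,
the element `t = (x⁹ - 3x³ - 1)/(x³(x³+1))` satisfies `t = x³ + x³/y⁹ + y⁹/x⁶`.
Moreover, if `γ` is an automorphism of an overfield `L ⊇ F` fixing `t`, and
`θ = γ(x³)` satisfies `(θ³ - 3θ - 1)(x⁶ + x³) = (θ² + θ)(x⁹ - 3x³ - 1)` in `L`,
then `θ = x³`, or `θ = -(x³+1)/x³`, or `θ = -1/(x³+1)`. -/
theorem stmt17 {K : Type u} [Field K] [IsAlgClosed K] (hchar : ringChar K ≠ 3)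
    {F : Type v} [Field F] [Algebra K F]
    (x y : F) (hrel : y ^ 9 + x ^ 6 + x ^ 3 = 0)
    (hx : Transcendental K x)
    (hgen : IntermediateField.adjoin K ({x, y} : Set F) = ⊤) :
    (x ^ 9 - 3 * x ^ 3 - 1) / (x ^ 3 * (x ^ 3 + 1)) =
        x ^ 3 + x ^ 3 / y ^ 9 + y ^ 9 / x ^ 6 ∧
    ∀ (L : Type w) [Field L] [Algebra F L] (γ : L ≃+* L),
      γ (algebraMap F L ((x ^ 9 - 3 * x ^ 3 - 1) / (x ^ 3 * (x ^ 3 + 1)))) =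
        algebraMap F L ((x ^ 9 - 3 * x ^ 3 - 1) / (x ^ 3 * (x ^ 3 + 1))) →
      ∀ θ : L, θ = γ (algebraMap F L (x ^ 3)) →
        (θ ^ 3 - 3 * θ - 1) *
            (algebraMap F L x ^ 6 + algebraMap F L x ^ 3) =
          (θ ^ 2 + θ) *
            (algebraMap F L x ^ 9 - 3 * algebraMap F L x ^ 3 - 1) →
        θ = algebraMap F L (x ^ 3) ∨
          θ = -(algebraMap F L (x ^ 3) + 1) / algebraMap F L (x ^ 3) ∨
          θ = -1 / (algebraMap F L (x ^ 3) + 1) :=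
  stmt17_general x y hrel hx
end
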